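/- Let θ > 0 and let (B_k)_{k≥2} be a sequence of independent random variables on a probability space with P(B_k = 1) = θ/(θ+k-1) and P(B_k = 0) = (k-1)/(θ+k-1). Then K(n)/log n → θ almost surely as n → ∞, where K(n) = 1 + ∑_{k=2}^{n} B_k. -/

import Mathlib

/-!
Write `K(n) = 1 + S(n)` with `S(n) = ∑_{k=2}^n B_k`. Its mean `m(n) = ∑_{k=2}^n θ/(θ+k-1)` is
`θ log n + O(1)` by comparison with the harmonic numbers, and since the `B_k` are independent
indicators, `Var S(n) ≤ m(n)`. Along `n_j = 2^{(j+1)^4}`, Chebyshev's inequality at level `(j+1)^3`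
gives bounds `O((j+1)^{-2})`, so by Borel–Cantelli almost surely
`|S(n_j) - m(n_j)| < (j+1)^3 = o(log n_j)` eventually, hence `K(n_j)/log n_j → θ`. Since `K` and
`log` are monotone and `log n_{j+1}/log n_j → 1`, sandwiching extends this to all `n`.
-/

open MeasureTheory ProbabilityTheory Filter Finset Topology

lemma Real.monotone_log_natCast : Monotone fun n : ℕ => Real.log n := by
  intro a b hab
  rcases Nat.eq_zero_or_pos a with rfl | ha
  · simpa using Real.log_natCast_nonneg b
  · exact Real.log_le_log (by exact_mod_cast ha) (by exact_mod_cast hab)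

lemma StrictMono.exists_tendsto_atTop_mem_Ico {N : ℕ → ℕ} (hN : StrictMono N) :
    ∃ J : ℕ → ℕ, Tendsto J atTop atTop ∧ ∀ n, N 0 ≤ n → n ∈ Set.Ico (N (J n)) (N (J n + 1)) := by
  classical
  refine ⟨fun n => Nat.findGreatest (fun j => N j ≤ n) n, ?_, fun n hn => ⟨?_, ?_⟩⟩
  · exact tendsto_atTop_atTop.2 fun b =>
      ⟨N b, fun n hn => Nat.le_findGreatest ((hN.id_le b).trans hn) hn⟩
  · exact Nat.findGreatest_spec (P := fun j => N j ≤ n) (Nat.zero_le n) hn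
  · by_contra! h
    have hle : _ + 1 ≤ n := (hN.id_le _).trans h
    have := Nat.le_findGreatest (P := fun j => N j ≤ n) hle h
    omega

theorem tendsto_div_of_monotone_of_subseq_tendsto_div {s L : ℕ → ℝ} {N : ℕ → ℕ} {θ : ℝ}
    (hs : Monotone s) (hs0 : ∀ n, 0 ≤ s n) (hL : Monotone L) (hN : StrictMono N)
    (hLpos : ∀ᶠ j in atTop, 0 < L (N j))
    (hsub : Tendsto (fun j => s (N j) / L (N j)) atTop (𝓝 θ))
    (hratio : Tendsto (fun j => L (N (j + 1)) / L (N j)) atTop (𝓝 1)) :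
    Tendsto (fun n => s n / L n) atTop (𝓝 θ) := by
  obtain ⟨J, hJ, hJN⟩ := hN.exists_tendsto_atTop_mem_Ico
  have hLpos' : ∀ᶠ j in atTop, 0 < L (N (j + 1)) := (tendsto_add_atTop_nat 1).eventually hLpos
  have hlower : Tendsto (fun j => s (N j) / L (N (j + 1))) atTop (𝓝 θ) := by
    refine (div_one θ ▸ hsub.div hratio one_ne_zero).congr' ?_
    filter_upwards [hLpos] with j hj
    simp only [Pi.div_apply]
    field_simp
  have hupper : Tendsto (fun j => s (N (j + 1)) / L (N j)) atTop (𝓝 θ) := by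
    refine (mul_one θ ▸ ((tendsto_add_atTop_iff_nat 1).2 hsub).mul hratio).congr' ?_
    filter_upwards [hLpos'] with j hj
    field_simp
  refine tendsto_of_tendsto_of_tendsto_of_le_of_le' (hlower.comp hJ) (hupper.comp hJ) ?_ ?_
    <;> filter_upwards [hJ.eventually hLpos, eventually_ge_atTop (N 0)] with n hpos hn
    <;> obtain ⟨hlo, hhi⟩ := hJN n hn
  · exact div_le_div₀ (hs0 n) (hs hlo) (hpos.trans_le (hL hlo)) (hL hhi.le)
  · exact div_le_div₀ (hs0 _) (hs hhi.le) hpos (hL hlo)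

lemma log_le_sum_Ioo_inv_le_one_add_log (n : ℕ) :
    Real.log n ≤ ∑ i ∈ Ioo 0 n, (i : ℝ)⁻¹ ∧ ∑ i ∈ Ioo 0 n, (i : ℝ)⁻¹ ≤ 1 + Real.log n := by
  rcases n with _ | m
  · simp
  have hH : ∑ i ∈ Ioo 0 (m + 1), (i : ℝ)⁻¹ = harmonic m := by
    rw [harmonic_eq_sum_Icc]
    push_cast
    congr 1
  rw [hH]
  have hmono : Real.log m ≤ Real.log (m + 1 : ℕ) := Real.monotone_log_natCast m.le_succ
  exact ⟨log_add_one_le_harmonic m, by linarith [harmonic_le_one_add_log m]⟩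

lemma sum_Icc_two_eq_sum_Ioo (f : ℕ → ℝ) (n : ℕ) :
    ∑ k ∈ Icc 2 n, f k = ∑ i ∈ Ioo 0 n, f (i + 1) := by
  refine sum_nbij' (· - 1) (· + 1) ?_ ?_ ?_ ?_ ?_ <;> intro k hk <;>
    simp only [mem_Icc, mem_Ioo] at hk ⊢
  all_goals first | omega | (congr 1; omega)

lemma abs_sum_Icc_two_div_sub_mul_log_le {θ : ℝ} (hθ : 0 ≤ θ) (n : ℕ) :
    |∑ k ∈ Icc 2 n, θ / (θ + k - 1) - θ * Real.log n| ≤ θ + 2 * θ ^ 2 := by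
  have hterm : ∀ i ∈ Ioo 0 n, θ / (θ + (i + 1 : ℕ) - 1) = θ / (θ + i) := by
    intro i _
    push_cast
    ring_nf
  rw [sum_Icc_two_eq_sum_Ioo, sum_congr rfl hterm]
  have hupper : ∑ i ∈ Ioo 0 n, θ / (θ + i) ≤ θ * ∑ i ∈ Ioo 0 n, (i : ℝ)⁻¹ := by
    rw [mul_sum]
    refine sum_le_sum fun i hi => ?_
    have hi : (0 : ℝ) < i := by exact_mod_cast (mem_Ioo.1 hi).1
    rw [div_eq_mul_inv]
    gcongr
    linarith
  have hgap : θ * ∑ i ∈ Ioo 0 n, (i : ℝ)⁻¹ - ∑ i ∈ Ioo 0 n, θ / (θ + i)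
      ≤ θ ^ 2 * ∑ i ∈ Ioo 0 n, ((i : ℝ) ^ 2)⁻¹ := by
    rw [mul_sum, mul_sum, ← sum_sub_distrib]
    refine sum_le_sum fun i hi => ?_
    have hi : (0 : ℝ) < i := by exact_mod_cast (mem_Ioo.1 hi).1
    calc θ * (i : ℝ)⁻¹ - θ / (θ + i) = θ ^ 2 / (i * (θ + i)) := by field_simp; ring
      _ ≤ θ ^ 2 / (i * i) := by gcongr; linarith
      _ = θ ^ 2 * ((i : ℝ) ^ 2)⁻¹ := by ring
  have hsq := sum_Ioo_inv_sq_le (α := ℝ) 0 n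
  obtain ⟨hlog, hlog'⟩ := log_le_sum_Ioo_inv_le_one_add_log n
  norm_num at hsq
  rw [abs_le]
  constructor <;> nlinarith [sq_nonneg θ]

lemma tendsto_div_of_abs_sub_mul_le {α : Type*} {l : Filter α} {f g e : α → ℝ} {θ : ℝ}
    (hg : ∀ᶠ j in l, 0 < g j) (h : ∀ᶠ j in l, |f j - θ * g j| ≤ e j)
    (he : Tendsto (fun j => e j / g j) l (𝓝 0)) :
    Tendsto (fun j => f j / g j) l (𝓝 θ) := by
  refine tendsto_sub_nhds_zero_iff.1 (squeeze_zero_norm' ?_ he)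
  filter_upwards [hg, h] with j hgj hj
  rw [Real.norm_eq_abs, show f j / g j - θ = (f j - θ * g j) / g j by field_simp, abs_div,
    abs_of_pos hgj]
  gcongr

def checkpoint (j : ℕ) : ℕ := 2 ^ (j + 1) ^ 4

lemma log_checkpoint (j : ℕ) : Real.log (checkpoint j) = ((j : ℝ) + 1) ^ 4 * Real.log 2 := by
  simp [checkpoint, Real.log_pow]

lemma strictMono_checkpoint : StrictMono checkpoint := fun a b hab =>
  Nat.pow_lt_pow_right one_lt_two (Nat.pow_lt_pow_left (by omega) (by norm_num))

lemma tendsto_log_checkpoint_succ_div :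
    Tendsto (fun j => Real.log (checkpoint (j + 1)) / Real.log (checkpoint j)) atTop (𝓝 1) := by
  have h : Tendsto (fun j : ℕ => (1 + 1 / ((j : ℝ) + 1)) ^ 4) atTop (𝓝 ((1 + 0) ^ 4)) :=
    (tendsto_one_div_add_atTop_nhds_zero_nat.const_add 1).pow 4
  rw [add_zero, one_pow] at h
  refine h.congr fun j => ?_
  rw [log_checkpoint, log_checkpoint]
  push_cast
  field_simp

lemma abs_sum_Icc_two_checkpoint_sub_le {θ : ℝ} (hθ : 0 ≤ θ) (j : ℕ) :
    |∑ k ∈ Icc 2 (checkpoint j), θ / (θ + k - 1) - θ * (((j : ℝ) + 1) ^ 4 * Real.log 2)|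
      ≤ θ + 2 * θ ^ 2 :=
  log_checkpoint j ▸ abs_sum_Icc_two_div_sub_mul_log_le hθ (checkpoint j)

section Probability

variable {Ω : Type*} [MeasurableSpace Ω] {μ : Measure Ω}

theorem ae_eventually_abs_sub_integral_lt [IsFiniteMeasure μ] {X : ℕ → Ω → ℝ}
    (hX : ∀ j, MemLp (X j) 2 μ) {c : ℕ → ℝ} (hc : ∀ j, 0 < c j)
    (hsum : Summable fun j => variance (X j) μ / c j ^ 2) :
    ∀ᵐ ω ∂μ, ∀ᶠ j in atTop, |X j ω - μ[X j]| < c j := by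
  have hfin : ∑' j, μ {ω | c j ≤ |X j ω - μ[X j]|} ≠ ⊤ := by
    refine ne_top_of_le_ne_top (ENNReal.ofReal_ne_top (r := ∑' j, variance (X j) μ / c j ^ 2)) ?_
    rw [ENNReal.ofReal_tsum_of_nonneg (fun j => div_nonneg (variance_nonneg _ _) (sq_nonneg _))
      hsum]
    exact ENNReal.tsum_le_tsum fun j => meas_ge_le_variance_div_sq (hX j) (hc j)
  filter_upwards [ae_eventually_notMem hfin] with ω hω
  simpa only [Set.mem_ofPred_eq, not_le] using hω

lemma memLp_two_of_ae_mem_Icc [IsFiniteMeasure μ] {Y : Ω → ℝ} (hY : AEStronglyMeasurable Y μ)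
    (h01 : ∀ᵐ ω ∂μ, Y ω ∈ Set.Icc 0 1) : MemLp Y 2 μ := by
  refine MemLp.of_bound hY 1 (h01.mono fun ω h => ?_)
  rw [Real.norm_eq_abs, abs_le]
  exact ⟨by linarith [h.1], h.2⟩

lemma variance_le_integral_of_ae_mem_Icc [IsProbabilityMeasure μ] {Y : Ω → ℝ}
    (hY : AEStronglyMeasurable Y μ) (h01 : ∀ᵐ ω ∂μ, Y ω ∈ Set.Icc 0 1) :
    variance Y μ ≤ μ[Y] := by
  have hL := memLp_two_of_ae_mem_Icc hY h01
  refine (variance_le_expectation_sq hY).trans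
    (integral_mono_ae hL.integrable_sq (hL.integrable one_le_two) (h01.mono fun ω h => ?_))
  simp only [Pi.pow_apply]
  nlinarith [h.1, h.2]

lemma variance_sum_le_sum_integral [IsProbabilityMeasure μ] {ι : Type*} {X : ι → Ω → ℝ}
    {s : Finset ι} (hX : ∀ i ∈ s, AEStronglyMeasurable (X i) μ)
    (h01 : ∀ i ∈ s, ∀ᵐ ω ∂μ, X i ω ∈ Set.Icc 0 1)
    (hind : Set.Pairwise ↑s fun i j => X i ⟂ᵢ[μ] X j) :
    variance (fun ω => ∑ i ∈ s, X i ω) μ ≤ ∑ i ∈ s, μ[X i] := by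
  rw [← Finset.sum_fn,
    IndepFun.variance_sum (fun i hi => memLp_two_of_ae_mem_Icc (hX i hi) (h01 i hi)) hind]
  exact sum_le_sum fun i hi => variance_le_integral_of_ae_mem_Icc (hX i hi) (h01 i hi)

lemma ae_eq_zero_or_eq_one [IsProbabilityMeasure μ] {X : Ω → ℕ} (hX : Measurable X)
    (h : μ {ω | X ω = 0} + μ {ω | X ω = 1} = 1) : ∀ᵐ ω ∂μ, X ω = 0 ∨ X ω = 1 := by
  have h0 : MeasurableSet {ω | X ω = 0} := hX (measurableSet_singleton 0)
  have h1 : MeasurableSet {ω | X ω = 1} := hX (measurableSet_singleton 1)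
  have hdisj : Disjoint {ω | X ω = 0} {ω | X ω = 1} :=
    Set.disjoint_left.2 fun ω (h0 : X ω = 0) (h1 : X ω = 1) => by omega
  exact (ae_mem_iff_measure_eq (h0.union h1).nullMeasurableSet).2
    (by rw [measure_union hdisj h1, h, measure_univ])

lemma integral_natCast_eq_measureReal {X : Ω → ℕ} (hX : Measurable X)
    (h01 : ∀ᵐ ω ∂μ, X ω = 0 ∨ X ω = 1) :
    μ[fun ω => (X ω : ℝ)] = μ.real {ω | X ω = 1} := by
  have h1 : MeasurableSet {ω | X ω = 1} := hX (measurableSet_singleton 1)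
  rw [← integral_indicator_one h1]
  refine integral_congr_ae (h01.mono fun ω h => ?_)
  rcases h with h | h <;> simp [h]

end Probability

section Feller

variable {Ω : Type*} [MeasurableSpace Ω] {μ : Measure Ω} [IsProbabilityMeasure μ] {θ : ℝ}

lemma feller_law_ae_mem_Icc_and_integral_eq (hθ : 0 < θ) {k : ℕ} (hk : 2 ≤ k) {X : Ω → ℕ}
    (hX : Measurable X)
    (h1 : μ {ω | X ω = 1} = ENNReal.ofReal (θ / (θ + k - 1)))
    (h0 : μ {ω | X ω = 0} = ENNReal.ofReal (((k : ℝ) - 1) / (θ + k - 1))) :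
    (∀ᵐ ω ∂μ, (X ω : ℝ) ∈ Set.Icc 0 1) ∧ μ[fun ω => (X ω : ℝ)] = θ / (θ + k - 1) := by
  have hk' : (1 : ℝ) ≤ k - 1 := by
    have : (2 : ℝ) ≤ k := by exact_mod_cast hk
    linarith
  have hpos : 0 < θ + k - 1 := by linarith
  have h01 : ∀ᵐ ω ∂μ, X ω = 0 ∨ X ω = 1 := by
    refine ae_eq_zero_or_eq_one hX ?_
    rw [h0, h1, ← ENNReal.ofReal_add (by positivity) (by positivity),
      show ((k : ℝ) - 1) / (θ + k - 1) + θ / (θ + k - 1) = 1 by field_simp; ring,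
      ENNReal.ofReal_one]
  refine ⟨h01.mono fun ω h => ?_, ?_⟩
  · rcases h with h | h <;> simp [h]
  · rw [integral_natCast_eq_measureReal hX h01, measureReal_def, h1,
      ENNReal.toReal_ofReal (by positivity)]

lemma feller_sum_moments (hθ : 0 < θ) {B : ℕ → Ω → ℕ} (hmeas : ∀ k, Measurable (B k))
    (hindep : iIndepFun (fun k : {k : ℕ // 2 ≤ k} => B k.val) μ)
    (hlaw1 : ∀ k, 2 ≤ k → μ {ω | B k ω = 1} = ENNReal.ofReal (θ / (θ + k - 1)))
    (hlaw0 : ∀ k, 2 ≤ k → μ {ω | B k ω = 0} = ENNReal.ofReal (((k : ℝ) - 1) / (θ + k - 1)))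
    (n : ℕ) :
    MemLp (fun ω => ∑ k ∈ Icc 2 n, (B k ω : ℝ)) 2 μ ∧
      μ[fun ω => ∑ k ∈ Icc 2 n, (B k ω : ℝ)] = ∑ k ∈ Icc 2 n, θ / (θ + k - 1) ∧
      variance (fun ω => ∑ k ∈ Icc 2 n, (B k ω : ℝ)) μ ≤ ∑ k ∈ Icc 2 n, θ / (θ + k - 1) := by
  have hB : ∀ k ∈ Icc 2 n, (∀ᵐ ω ∂μ, (B k ω : ℝ) ∈ Set.Icc 0 1) ∧
      μ[fun ω => (B k ω : ℝ)] = θ / (θ + k - 1) := fun k hk =>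
    feller_law_ae_mem_Icc_and_integral_eq hθ (mem_Icc.1 hk).1 (hmeas k)
      (hlaw1 k (mem_Icc.1 hk).1) (hlaw0 k (mem_Icc.1 hk).1)
  have hXmeas : ∀ k ∈ Icc 2 n, AEStronglyMeasurable (fun ω => (B k ω : ℝ)) μ := fun k _ =>
    (measurable_from_top.comp (hmeas k)).aestronglyMeasurable
  have hL : ∀ k ∈ Icc 2 n, MemLp (fun ω => (B k ω : ℝ)) 2 μ := fun k hk =>
    memLp_two_of_ae_mem_Icc (hXmeas k hk) (hB k hk).1
  have hpair : Set.Pairwise ↑(Icc 2 n) fun i j =>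
      (fun ω => (B i ω : ℝ)) ⟂ᵢ[μ] fun ω => (B j ω : ℝ) := fun i hi j hj hij =>
    (hindep.indepFun (i := ⟨i, (mem_Icc.1 hi).1⟩) (j := ⟨j, (mem_Icc.1 hj).1⟩)
      (by simpa using hij)).comp measurable_from_top measurable_from_top
  have hmean : μ[fun ω => ∑ k ∈ Icc 2 n, (B k ω : ℝ)] = ∑ k ∈ Icc 2 n, θ / (θ + k - 1) := by
    rw [integral_finsetSum _ fun k hk => (hL k hk).integrable one_le_two]
    exact sum_congr rfl fun k hk => (hB k hk).2
  refine ⟨memLp_finsetSum _ hL, hmean, ?_⟩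
  calc variance (fun ω => ∑ k ∈ Icc 2 n, (B k ω : ℝ)) μ
      ≤ ∑ k ∈ Icc 2 n, μ[fun ω => (B k ω : ℝ)] :=
        variance_sum_le_sum_integral hXmeas (fun k hk => (hB k hk).1) hpair
    _ = ∑ k ∈ Icc 2 n, θ / (θ + k - 1) := sum_congr rfl fun k hk => (hB k hk).2

lemma ae_eventually_abs_feller_sum_checkpoint_sub_lt (hθ : 0 < θ) {B : ℕ → Ω → ℕ}
    (hmeas : ∀ k, Measurable (B k))
    (hindep : iIndepFun (fun k : {k : ℕ // 2 ≤ k} => B k.val) μ)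
    (hlaw1 : ∀ k, 2 ≤ k → μ {ω | B k ω = 1} = ENNReal.ofReal (θ / (θ + k - 1)))
    (hlaw0 : ∀ k, 2 ≤ k → μ {ω | B k ω = 0} = ENNReal.ofReal (((k : ℝ) - 1) / (θ + k - 1))) :
    ∀ᵐ ω ∂μ, ∀ᶠ j in atTop, |∑ k ∈ Icc 2 (checkpoint j), (B k ω : ℝ)
      - ∑ k ∈ Icc 2 (checkpoint j), θ / (θ + k - 1)| < ((j : ℝ) + 1) ^ 3 := by
  have hmoments := feller_sum_moments hθ hmeas hindep hlaw1 hlaw0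
  set C := θ * Real.log 2 + θ + 2 * θ ^ 2
  have hvar : ∀ j : ℕ, variance (fun ω => ∑ k ∈ Icc 2 (checkpoint j), (B k ω : ℝ)) μ
      ≤ C * ((j : ℝ) + 1) ^ 4 := fun j => by
    have h4 : 1 ≤ ((j : ℝ) + 1) ^ 4 := one_le_pow₀ (by linarith [j.cast_nonneg (α := ℝ)])
    have := (abs_le.1 (abs_sum_Icc_two_checkpoint_sub_le hθ.le j)).2
    nlinarith [(hmoments (checkpoint j)).2.2]
  have hsum : Summable fun j => variance (fun ω => ∑ k ∈ Icc 2 (checkpoint j), (B k ω : ℝ)) μ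
      / (((j : ℝ) + 1) ^ 3) ^ 2 := by
    refine Summable.of_nonneg_of_le (fun j => div_nonneg (variance_nonneg _ _) (sq_nonneg _))
      (fun j => ?_) (((summable_nat_add_iff 1).2
        (Real.summable_one_div_nat_pow.2 one_lt_two)).mul_left C)
    calc _ ≤ C * ((j : ℝ) + 1) ^ 4 / (((j : ℝ) + 1) ^ 3) ^ 2 := by gcongr; exact hvar j
      _ = _ := by push_cast; field_simp
  filter_upwards [ae_eventually_abs_sub_integral_lt (c := fun j => ((j : ℝ) + 1) ^ 3)
    (fun j => (hmoments (checkpoint j)).1) (fun j => by positivity) hsum] with ω hω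
  simpa only [(hmoments _).2.1] using hω

lemma ae_tendsto_feller_checkpoint (hθ : 0 < θ) {B : ℕ → Ω → ℕ} (hmeas : ∀ k, Measurable (B k))
    (hindep : iIndepFun (fun k : {k : ℕ // 2 ≤ k} => B k.val) μ)
    (hlaw1 : ∀ k, 2 ≤ k → μ {ω | B k ω = 1} = ENNReal.ofReal (θ / (θ + k - 1)))
    (hlaw0 : ∀ k, 2 ≤ k → μ {ω | B k ω = 0} = ENNReal.ofReal (((k : ℝ) - 1) / (θ + k - 1))) :
    ∀ᵐ ω ∂μ, Tendsto (fun j => (1 + ∑ k ∈ Icc 2 (checkpoint j), (B k ω : ℝ)) /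
      Real.log (checkpoint j)) atTop (𝓝 θ) := by
  set C := 2 + θ + 2 * θ ^ 2
  filter_upwards [ae_eventually_abs_feller_sum_checkpoint_sub_lt hθ hmeas hindep hlaw1 hlaw0]
    with ω hω
  refine tendsto_div_of_abs_sub_mul_le (e := fun j : ℕ => C * ((j : ℝ) + 1) ^ 3)
    (Eventually.of_forall fun j => by rw [log_checkpoint]; positivity) ?_ ?_
  · filter_upwards [hω] with j hdev
    have h3 : 1 ≤ ((j : ℝ) + 1) ^ 3 := one_le_pow₀ (by linarith [j.cast_nonneg (α := ℝ)])
    have hmean := abs_le.1 (abs_sum_Icc_two_checkpoint_sub_le hθ.le j)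
    rw [abs_lt] at hdev
    rw [log_checkpoint, abs_le]
    constructor <;> nlinarith [hdev.1, hdev.2]
  · have h := tendsto_one_div_add_atTop_nhds_zero_nat.const_mul (C / Real.log 2)
    rw [mul_zero] at h
    refine h.congr fun j => ?_
    rw [log_checkpoint]
    field_simp

end Feller

/-- The strong law of large numbers of Korwar and Hollander: if `(B_k)_{k≥2}` are
independent Bernoulli random variables with `P(B_k = 1) = θ/(θ+k-1)` and
`K(n) = 1 + ∑_{k=2}^n B_k` (the number of cycles of an Ewens(n, θ) permutation under the
Feller coupling), then `K(n)/log n → θ` almost surely. -/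
theorem ewens_cycles_slln {Ω : Type*} [MeasurableSpace Ω]
    (μ : Measure Ω) [IsProbabilityMeasure μ]
    (θ : ℝ) (hθ : 0 < θ)
    (B : ℕ → Ω → ℕ) (hmeas : ∀ k, Measurable (B k))
    (hindep : iIndepFun
      (fun k : {k : ℕ // 2 ≤ k} => B k.val) μ)
    (hlaw1 : ∀ k, 2 ≤ k → μ {ω | B k ω = 1} = ENNReal.ofReal (θ / (θ + k - 1)))
    (hlaw0 : ∀ k, 2 ≤ k → μ {ω | B k ω = 0} = ENNReal.ofReal (((k : ℝ) - 1) / (θ + k - 1))) :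
    ∀ᵐ ω ∂μ,
      Tendsto (fun n : ℕ => (1 + ∑ k ∈ Finset.Icc 2 n, (B k ω : ℝ)) / Real.log n)
        atTop (nhds θ) := by
  filter_upwards [ae_tendsto_feller_checkpoint hθ hmeas hindep hlaw1 hlaw0] with ω hω
  have hmono : Monotone fun n => 1 + ∑ k ∈ Icc 2 n, (B k ω : ℝ) := fun a b hab =>
    add_le_add_right (sum_le_sum_of_subset_of_nonneg (Icc_subset_Icc_right hab)
      fun _ _ _ => Nat.cast_nonneg _) 1
  have hLpos : ∀ᶠ j in atTop, 0 < Real.log (checkpoint j) :=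
    Eventually.of_forall fun j => by rw [log_checkpoint]; positivity
  exact tendsto_div_of_monotone_of_subseq_tendsto_div hmono (fun n => by positivity)
    Real.monotone_log_natCast strictMono_checkpoint hLpos hω tendsto_log_checkpoint_succ_div
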